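/- arXiv:1402.2262 — 3 statements merged into one kernel-verified Lean document; each statement's English description precedes it below -/
import Mathlib

section
/- Let t' ∉ supp(ν) be such that for some δ > 0 one has ]t'−δ, t'] ⊂ ℝ \ U_ν and ]t', t'+δ[ ⊂ U_ν. Then ∫ dν(x)/(t'−x)² = 1 and ∫ dν(x)/(t'−x)³ < 0. -/
open MeasureTheory Filter Topology Set

/-- `v_μ(u) = inf {v ≥ 0 : ∫ dμ(x)/((u−x)² + v²) ≤ 1}`. -/
noncomputable def vF (μ : Measure ℝ) (u : ℝ) : ℝ :=
  sInf {v : ℝ | 0 ≤ v ∧ ∫ x, ((u - x) ^ 2 + v ^ 2)⁻¹ ∂μ ≤ 1}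

/-- `U_μ = {t : v_μ(t) > 0}`. -/
def USet (μ : Measure ℝ) : Set ℝ := {t | 0 < vF μ t}

/-- The (topological) support of a measure on ℝ. -/
def MeasSupp (μ : Measure ℝ) : Set ℝ := {x | ∀ U ∈ nhds x, μ U ≠ 0}

/-!
Away from the support of `μ`, `v ↦ ∫ dμ(x)/((u−x)² + v²)` is continuous, so the infimum defining
`v_μ(u)` is attained and `u ∈ U_μ` exactly when `F(u) = ∫ dμ(x)/(u−x)² > 1`. Thus `F(t') ≤ 1`,
while `F > 1` just to the right of `t'`, and continuity of `F` gives `F(t') = 1`. Just to the left,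
`F(t' − d) ≤ 1 = F(t')`; but `y ↦ y⁻²` lies strictly above its tangent lines on each half-line, so
`F(t' − d) > F(t') + 2d ∫ dμ(x)/(t'−x)³`, which forces the last integral to be negative.
-/

theorem integral_lt_integral_of_ae_lt {α : Type*} [MeasurableSpace α] {μ : Measure α} [NeZero μ]
    {f g : α → ℝ} (hf : Integrable f μ) (hg : Integrable g μ) (hfg : ∀ᵐ x ∂μ, f x < g x) :
    ∫ x, f x ∂μ < ∫ x, g x ∂μ := by
  rw [← sub_pos, ← integral_sub hg hf, integral_pos_iff_support_of_nonneg_ae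
    (hfg.mono fun x hx => (sub_pos.2 hx).le) (hg.sub hf), pos_iff_ne_zero]
  intro hnull
  have hne : ∀ᵐ x ∂μ, g x - f x ≠ 0 := hfg.mono fun x hx => (sub_pos.2 hx).ne'
  obtain ⟨x, hx, hx'⟩ := ((measure_eq_zero_iff_ae_notMem.1 hnull).and hne).exists
  exact hx hx'

theorem inv_sq_tangent_lt {a h : ℝ} (hh : h ≠ 0) (hha : |h| < |a|) :
    (a ^ 2)⁻¹ + 2 * h * (a ^ 3)⁻¹ < ((a - h) ^ 2)⁻¹ := by
  have ha : 0 < |a| := (abs_nonneg h).trans_lt hha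
  have hsame : 0 < a * (a - h) := by
    have hah : a * h ≤ |a| * |h| := (le_abs_self _).trans (abs_mul a h).le
    nlinarith [sq_abs a, mul_lt_mul_of_pos_left hha ha]
  have ha0 : a ≠ 0 := abs_pos.1 ha
  have hah0 : a - h ≠ 0 := right_ne_zero_of_mul hsame.ne'
  have key : ((a - h) ^ 2)⁻¹ - ((a ^ 2)⁻¹ + 2 * h * (a ^ 3)⁻¹)
      = h ^ 2 * (a ^ 2 + 2 * (a * (a - h))) / (a ^ 4 * (a - h) ^ 2) := by
    field_simp; ring
  have : 0 < h ^ 2 * (a ^ 2 + 2 * (a * (a - h))) / (a ^ 4 * (a - h) ^ 2) := by positivity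
  linarith

theorem norm_inv_pow_le {a e : ℝ} (he : 0 < e) (ha : e ≤ |a|) (n : ℕ) :
    ‖(a ^ n)⁻¹‖ ≤ (e ^ n)⁻¹ := by
  rw [norm_inv, norm_pow, Real.norm_eq_abs]
  exact inv_anti₀ (pow_pos he n) (pow_le_pow_left₀ he.le ha n)

theorem norm_inv_sq_add_sq_le {a e : ℝ} (he : 0 < e) (ha : e ≤ |a|) (v : ℝ) :
    ‖(a ^ 2 + v ^ 2)⁻¹‖ ≤ (e ^ 2)⁻¹ := by
  have hea : e ^ 2 ≤ a ^ 2 := by simpa only [sq_abs] using pow_le_pow_left₀ he.le ha 2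
  rw [Real.norm_of_nonneg (by positivity)]
  exact inv_anti₀ (by positivity) (by nlinarith)

section DistanceToSupport

variable {μ : Measure ℝ} {t u e : ℝ}

theorem exists_ae_le_abs_sub_of_notMem_measSupp (ht : t ∉ MeasSupp μ) :
    ∃ e > 0, ∀ᵐ x ∂μ, e ≤ |t - x| := by
  simp only [MeasSupp, mem_ofPred_eq, not_forall, not_not] at ht
  obtain ⟨U, hU, hU0⟩ := ht
  obtain ⟨e, he, hball⟩ := Metric.mem_nhds_iff.1 hU
  refine ⟨e, he, (measure_eq_zero_iff_ae_notMem.1 (measure_mono_null hball hU0)).mono ?_⟩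
  intro x hx
  simpa [Real.dist_eq, abs_sub_comm] using hx

theorem ae_half_le_abs_sub (h : ∀ᵐ x ∂μ, e ≤ |t - x|) (hu : |u - t| ≤ e / 2) :
    ∀ᵐ x ∂μ, e / 2 ≤ |u - x| := by
  filter_upwards [h] with x hx
  linarith [abs_sub_le t u x, abs_sub_comm t u]

section Finite

variable [IsFiniteMeasure μ]

theorem integrable_inv_pow_sub (he : 0 < e) (h : ∀ᵐ x ∂μ, e ≤ |t - x|) (n : ℕ) :
    Integrable (fun x => ((t - x) ^ n)⁻¹) μ :=
  .of_bound (by fun_prop) _ (h.mono fun _ hx => norm_inv_pow_le he hx n)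

theorem continuous_integral_inv_sq_add_sq (he : 0 < e) (h : ∀ᵐ x ∂μ, e ≤ |u - x|) :
    Continuous fun v => ∫ x, ((u - x) ^ 2 + v ^ 2)⁻¹ ∂μ := by
  refine continuous_of_dominated (bound := fun _ => (e ^ 2)⁻¹) (fun _ => by fun_prop)
    (fun v => h.mono fun _ hx => norm_inv_sq_add_sq_le he hx v) (integrable_const _) ?_
  filter_upwards [h] with x hx
  have : (u - x) ^ 2 ≠ 0 := pow_ne_zero 2 (abs_pos.1 (he.trans_le hx))
  exact Continuous.inv₀ (by fun_prop) fun v => by positivity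

theorem continuousAt_integral_inv_sq (he : 0 < e) (h : ∀ᵐ x ∂μ, e ≤ |t - x|) :
    ContinuousAt (fun u => ∫ x, ((u - x) ^ 2)⁻¹ ∂μ) t := by
  have hnear : ∀ᶠ u in 𝓝 t, ∀ᵐ x ∂μ, e / 2 ≤ |u - x| := by
    filter_upwards [Metric.closedBall_mem_nhds t (half_pos he)] with u hu
    exact ae_half_le_abs_sub h (by simpa [Real.dist_eq] using hu)
  refine continuousAt_of_dominated (bound := fun _ => ((e / 2) ^ 2)⁻¹)
    (.of_forall fun _ => by fun_prop)
    (hnear.mono fun u hu => hu.mono fun _ hx => norm_inv_pow_le (half_pos he) hx 2)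
    (integrable_const _) ?_
  filter_upwards [h] with x hx
  exact (continuousAt_id.sub continuousAt_const).pow 2 |>.inv₀
    (pow_ne_zero 2 (abs_pos.1 (he.trans_le hx)))

theorem integral_inv_sq_add_two_mul_integral_inv_cube_lt [NeZero μ] (he : 0 < e)
    (h : ∀ᵐ x ∂μ, e ≤ |t - x|) {d : ℝ} (hd : 0 < d) (hde : d ≤ e / 2) :
    ∫ x, ((t - x) ^ 2)⁻¹ ∂μ + 2 * d * ∫ x, ((t - x) ^ 3)⁻¹ ∂μ < ∫ x, ((t - d - x) ^ 2)⁻¹ ∂μ := by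
  have h2 := integrable_inv_pow_sub he h 2
  have h3 := (integrable_inv_pow_sub he h 3).const_mul (2 * d)
  have hshift : ∀ᵐ x ∂μ, e / 2 ≤ |t - d - x| :=
    ae_half_le_abs_sub h (by rwa [sub_sub_cancel_left, abs_neg, abs_of_pos hd])
  rw [← integral_const_mul, ← integral_add h2 h3]
  refine integral_lt_integral_of_ae_lt (h2.add h3) (integrable_inv_pow_sub (half_pos he) hshift 2)
    (h.mono fun x hx => ?_)
  have hdx : |d| < |t - x| := by rw [abs_of_pos hd]; linarith
  simpa [sub_right_comm] using inv_sq_tangent_lt hd.ne' hdx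

end Finite

theorem mem_USet_iff [IsProbabilityMeasure μ] (he : 0 < e) (h : ∀ᵐ x ∂μ, e ≤ |u - x|) :
    u ∈ USet μ ↔ 1 < ∫ x, ((u - x) ^ 2)⁻¹ ∂μ := by
  set S := {v : ℝ | 0 ≤ v ∧ ∫ x, ((u - x) ^ 2 + v ^ 2)⁻¹ ∂μ ≤ 1}
  have hbdd : BddBelow S := ⟨0, fun _ hv => hv.1⟩
  constructor
  · intro hu
    by_contra! hF
    have h0 : (0 : ℝ) ∈ S := ⟨le_rfl, by simpa using hF⟩
    exact (csInf_le hbdd h0).not_gt hu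
  · intro hF
    have hclosed : IsClosed S :=
      isClosed_Ici.inter (isClosed_le (continuous_integral_inv_sq_add_sq he h) continuous_const)
    have h1 : (1 : ℝ) ∈ S := by
      have hle : ∀ x, ‖((u - x) ^ 2 + 1 ^ 2)⁻¹‖ ≤ 1 := fun x => by
        rw [Real.norm_of_nonneg (by positivity)]
        exact inv_le_one_of_one_le₀ (by nlinarith [sq_nonneg (u - x)])
      refine ⟨zero_le_one, le_of_abs_le ?_⟩
      simpa using norm_integral_le_of_norm_le_const (μ := μ) (.of_forall hle)
    have hmem : vF μ u ∈ S := hclosed.csInf_mem ⟨1, h1⟩ hbdd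
    refine hmem.1.lt_of_ne fun hv => hF.not_ge ?_
    simpa [← hv] using hmem.2

end DistanceToSupport

section Boundary

variable {μ : Measure ℝ} [IsProbabilityMeasure μ] {t : ℝ}

theorem integral_inv_sq_eq_one_of_frequently_mem_USet (ht : t ∉ MeasSupp μ) (htU : t ∉ USet μ)
    (hU : ∃ᶠ u in 𝓝[>] t, u ∈ USet μ) : ∫ x, ((t - x) ^ 2)⁻¹ ∂μ = 1 := by
  obtain ⟨e, he, h⟩ := exists_ae_le_abs_sub_of_notMem_measSupp ht
  refine le_antisymm (not_lt.1 (mt (mem_USet_iff he h).2 htU)) (not_lt.1 fun hlt => hU ?_)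
  have hnotMem : ∀ᶠ u in 𝓝 t, u ∉ USet μ := by
    filter_upwards [(continuousAt_integral_inv_sq he h).eventually_lt continuousAt_const hlt,
      Metric.closedBall_mem_nhds t (half_pos he)] with u hFu hu
    rw [mem_USet_iff (half_pos he) (ae_half_le_abs_sub h hu)]
    exact hFu.not_gt
  exact nhdsWithin_le_nhds hnotMem

theorem integral_inv_cube_neg_of_frequently_notMem_USet (ht : t ∉ MeasSupp μ)
    (hF : 1 ≤ ∫ x, ((t - x) ^ 2)⁻¹ ∂μ) (hU : ∃ᶠ u in 𝓝[<] t, u ∉ USet μ) :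
    ∫ x, ((t - x) ^ 3)⁻¹ ∂μ < 0 := by
  obtain ⟨e, he, h⟩ := exists_ae_le_abs_sub_of_notMem_measSupp ht
  obtain ⟨u, huU, hu⟩ :=
    (hU.and_eventually (Ioo_mem_nhdsLT (sub_lt_self t (half_pos he)))).exists
  have hlt := integral_inv_sq_add_two_mul_integral_inv_cube_lt he h (d := t - u)
    (sub_pos.2 hu.2) (by linarith [hu.1])
  have hdist : |u - t| ≤ e / 2 := by rw [abs_sub_comm, abs_of_pos (sub_pos.2 hu.2)]; linarith [hu.1]
  have hFu := not_lt.1 (mt (mem_USet_iff (half_pos he) (ae_half_le_abs_sub h hdist)).2 huU)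
  rw [sub_sub_cancel] at hlt
  nlinarith [sub_pos.2 hu.2]

end Boundary

theorem stmt5_general (ν : Measure ℝ) [IsProbabilityMeasure ν]
    (t' δ : ℝ) (ht : t' ∉ MeasSupp ν) (hδ : 0 < δ)
    (h1 : Set.Ioc (t' - δ) t' ⊆ (USet ν)ᶜ) (h2 : Set.Ioo t' (t' + δ) ⊆ USet ν) :
    ∫ x, ((t' - x) ^ 2)⁻¹ ∂ν = 1 ∧ ∫ x, ((t' - x) ^ 3)⁻¹ ∂ν < 0 := by
  have hright : ∀ᶠ u in 𝓝[>] t', u ∈ USet ν :=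
    mem_of_superset (Ioo_mem_nhdsGT (lt_add_of_pos_right t' hδ)) h2
  have hleft : ∀ᶠ u in 𝓝[<] t', u ∉ USet ν :=
    mem_of_superset (Ioo_mem_nhdsLT (sub_lt_self t' hδ)) (Ioo_subset_Ioc_self.trans h1)
  have hF := integral_inv_sq_eq_one_of_frequently_mem_USet ht
    (h1 ⟨sub_lt_self t' hδ, le_rfl⟩) hright.frequently
  exact ⟨hF, integral_inv_cube_neg_of_frequently_notMem_USet ht hF.ge hleft.frequently⟩

/-- if `t' ∉ supp(ν)`, `]t'−δ,t'] ⊆ ℝ \ U_ν` and `]t',t'+δ[ ⊆ U_ν`, then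
`∫ dν(x)/(t'−x)² = 1` and `∫ dν(x)/(t'−x)³ < 0`. -/
theorem stmt5 (ν : Measure ℝ) [IsProbabilityMeasure ν] (hcomp : IsCompact (MeasSupp ν))
    (t' δ : ℝ) (ht : t' ∉ MeasSupp ν) (hδ : 0 < δ)
    (h1 : Set.Ioc (t' - δ) t' ⊆ (USet ν)ᶜ) (h2 : Set.Ioo t' (t' + δ) ⊆ USet ν) :
    ∫ x, ((t' - x) ^ 2)⁻¹ ∂ν = 1 ∧ ∫ x, ((t' - x) ^ 3)⁻¹ ∂ν < 0 :=
  stmt5_general ν t' δ ht hδ h1 h2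
end

section
/- For every t ∈ U_ν, v_N(t) converges to v_ν(t) as N → ∞. -/
/-! For `v > 0` the integrand `((t - x)² + v²)⁻¹` is bounded and continuous, so weak convergence
carries strict inequalities `∫ … dν ≶ 1` over to `μ_N`. Since `v ↦ ∫ ((t - x)² + v²)⁻¹ dν` is
strictly decreasing on `(0, ∞)`, it is `< 1` just above `v_ν(t)` and `> 1` just below, which bounds
`v_N(t)` from above and excludes the values `0 < u < v_ν(t) - ε` for it. The value `u = 0`, with
its unbounded integrand, is excluded by approximating that integrand from below by bounded
continuous functions (monotone convergence); this needs it to be `μ_N`-integrable, which holds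
because `μ_N` is a finite sum of atoms. -/

open MeasureTheory Filter Topology Set
open scoped ENNReal

/-- `H_μ(z) = z + ∫ dμ(x)/(z−x)`. -/
noncomputable def HF (μ : Measure ℝ) (z : ℝ) : ℝ := z + ∫ x, (z - x)⁻¹ ∂μ

/-- `Ψ_μ(t) = t + ∫ (t−x) dμ(x)/((t−x)² + v_μ(t)²)`. -/
noncomputable def PsiF (μ : Measure ℝ) (t : ℝ) : ℝ :=
  t + ∫ x, (t - x) / ((t - x) ^ 2 + vF μ t ^ 2) ∂μ

/-- `ν̂_N = (1/(N−r)) Σ_{j=1}^{N−r} δ_{β_j(N)}`. -/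
noncomputable def hatNu (r : ℕ) (β : ℕ → ℕ → ℝ) (N : ℕ) : Measure ℝ :=
  ((N - r : ℕ) : ℝ≥0∞)⁻¹ • ∑ i ∈ Finset.range (N - r), Measure.dirac (β N i)

open scoped BoundedContinuousFunction

theorem integral_lt_integral_of_forall_lt {α : Type*} [MeasurableSpace α] {μ : Measure α}
    [NeZero μ] {f g : α → ℝ} (hf : Integrable f μ) (hg : Integrable g μ) (h : ∀ x, f x < g x) :
    ∫ x, f x ∂μ < ∫ x, g x ∂μ := by
  have hsupp : Function.support (fun x => g x - f x) = univ :=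
    eq_univ_of_forall fun x => sub_ne_zero.2 (h x).ne'
  have hpos : 0 < ∫ x, g x - f x ∂μ := by
    rw [integral_pos_iff_support_of_nonneg (fun x => sub_nonneg.2 (h x).le) (hg.sub hf), hsupp]
    exact pos_iff_ne_zero.2 (Measure.measure_univ_ne_zero.2 (NeZero.ne μ))
  rw [integral_sub hg hf] at hpos
  linarith

theorem integrable_smul_sum_dirac_add_sum_dirac {α E ι κ : Type*} [MeasurableSpace α]
    [MeasurableSingletonClass α] [NormedAddCommGroup E] (f : α → E) {c : ℝ≥0∞} (hc : c ≠ ∞)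
    (s : Finset ι) (a : ι → ℝ≥0∞) (ha : ∀ i, a i ≠ ∞) (x : ι → α) (s' : Finset κ) (y : κ → α) :
    Integrable f (c • (∑ i ∈ s, a i • Measure.dirac (x i) + ∑ j ∈ s', Measure.dirac (y j))) := by
  refine .smul_measure (.add_measure ?_ ?_) hc
  · exact integrable_finsetSum_measure.2 fun i _ =>
      (integrable_dirac enorm_lt_top).smul_measure (ha i)
  · exact integrable_finsetSum_measure.2 fun j _ => integrable_dirac enorm_lt_top

/-- `|t + i v - x|⁻²`; note the junk value `vIntegrand t 0 t = 0⁻¹ = 0`. -/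
noncomputable def vIntegrand (t v x : ℝ) : ℝ := ((t - x) ^ 2 + v ^ 2)⁻¹

theorem vF_eq (μ : Measure ℝ) (t : ℝ) :
    vF μ t = sInf {v : ℝ | 0 ≤ v ∧ ∫ x, vIntegrand t v x ∂μ ≤ 1} := rfl

theorem vIntegrand_nonneg (t v x : ℝ) : 0 ≤ vIntegrand t v x := by
  unfold vIntegrand; positivity

theorem vIntegrand_le_inv_sq (t x : ℝ) {v : ℝ} (hv : v ≠ 0) : vIntegrand t v x ≤ (v ^ 2)⁻¹ := by
  unfold vIntegrand; gcongr; exact le_add_of_nonneg_left (sq_nonneg _)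

theorem strictAntiOn_vIntegrand (t x : ℝ) : StrictAntiOn (fun v => vIntegrand t v x) (Ioi 0) :=
  fun u (hu : 0 < u) _ _ huv => by simp only [vIntegrand]; gcongr

theorem continuous_vIntegrand (t : ℝ) {v : ℝ} (hv : v ≠ 0) : Continuous (vIntegrand t v) :=
  Continuous.inv₀ (by fun_prop) fun x => by positivity

noncomputable def vIntegrandBCF (t : ℝ) {v : ℝ} (hv : v ≠ 0) : ℝ →ᵇ ℝ :=
  .ofNormedAddCommGroup (vIntegrand t v) (continuous_vIntegrand t hv) (v ^ 2)⁻¹ fun x => by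
    rw [Real.norm_of_nonneg (vIntegrand_nonneg t v x)]
    exact vIntegrand_le_inv_sq t x hv

theorem integrable_vIntegrand (μ : Measure ℝ) [IsFiniteMeasure μ] (t : ℝ) {v : ℝ} (hv : v ≠ 0) :
    Integrable (vIntegrand t v) μ :=
  (vIntegrandBCF t hv).integrable μ

theorem strictAntiOn_integral_vIntegrand (μ : Measure ℝ) [IsFiniteMeasure μ] [NeZero μ]
    (t : ℝ) : StrictAntiOn (fun v => ∫ x, vIntegrand t v x ∂μ) (Ioi 0) :=
  fun u (hu : 0 < u) v (hv : 0 < v) huv =>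
    integral_lt_integral_of_forall_lt (integrable_vIntegrand μ t hv.ne')
      (integrable_vIntegrand μ t hu.ne') fun x => strictAntiOn_vIntegrand t x hu hv huv

theorem integral_vIntegrand_one_le_one (μ : Measure ℝ) [IsProbabilityMeasure μ] (t : ℝ) :
    ∫ x, vIntegrand t 1 x ∂μ ≤ 1 := by
  calc ∫ x, vIntegrand t 1 x ∂μ ≤ ∫ _, (1 : ℝ) ∂μ :=
        integral_mono (integrable_vIntegrand μ t one_ne_zero) (integrable_const 1) fun x => by
          simpa using vIntegrand_le_inv_sq t x one_ne_zero
    _ = 1 := by simp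

theorem vF_nonneg (μ : Measure ℝ) (t : ℝ) : 0 ≤ vF μ t :=
  Real.sInf_nonneg fun _ hv => hv.1

theorem vF_le {μ : Measure ℝ} {t v : ℝ} (hv : 0 ≤ v) (h : ∫ x, vIntegrand t v x ∂μ ≤ 1) :
    vF μ t ≤ v :=
  csInf_le ⟨0, fun _ hu => hu.1⟩ ⟨hv, h⟩

theorem one_lt_integral_of_lt_vF {μ : Measure ℝ} {t v : ℝ} (hv : 0 ≤ v) (h : v < vF μ t) :
    1 < ∫ x, vIntegrand t v x ∂μ :=
  lt_of_not_ge fun h' => h.not_ge (vF_le hv h')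

theorem integral_lt_one_of_vF_lt {μ : Measure ℝ} [IsFiniteMeasure μ] [NeZero μ] {t v : ℝ}
    (hpos : 0 < vF μ t) (h : vF μ t < v) : ∫ x, vIntegrand t v x ∂μ < 1 := by
  have hne : {u : ℝ | 0 ≤ u ∧ ∫ x, vIntegrand t u x ∂μ ≤ 1}.Nonempty :=
    nonempty_iff_ne_empty.2 fun he => by simp [vF_eq, he] at hpos
  obtain ⟨u, ⟨hu0, hu1⟩, huv⟩ := exists_lt_of_csInf_lt hne h
  have hu : 0 < u := hpos.trans_le (vF_le hu0 hu1)
  exact (strictAntiOn_integral_vIntegrand μ t hu (hu.trans huv) huv).trans_le hu1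

theorem le_vF_of_one_lt_integral {μ : Measure ℝ} [IsProbabilityMeasure μ] {t w : ℝ}
    (h0 : 1 < ∫ x, vIntegrand t 0 x ∂μ) (hw1 : 1 < ∫ x, vIntegrand t w x ∂μ) : w ≤ vF μ t := by
  rw [vF_eq]
  refine le_csInf ⟨1, zero_le_one, integral_vIntegrand_one_le_one μ t⟩ ?_
  rintro u ⟨hu0, hu1⟩
  by_contra! huw
  rcases hu0.eq_or_lt with rfl | hu
  · linarith
  · linarith [(strictAntiOn_integral_vIntegrand μ t).antitoneOn hu (hu.trans huw) huw.le]

theorem sq_sub_mul_vIntegrand_le_one (t v x : ℝ) : (t - x) ^ 2 * vIntegrand t v x ≤ 1 := by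
  unfold vIntegrand
  rcases (add_nonneg (sq_nonneg (t - x)) (sq_nonneg v)).eq_or_lt with h | h
  · simp [← h]
  · exact mul_inv_le_one_of_le₀ (le_add_of_nonneg_right (sq_nonneg v)) h.le

theorem sq_sub_mul_vIntegrand_sq_le (t v x : ℝ) :
    (t - x) ^ 2 * vIntegrand t v x ^ 2 ≤ vIntegrand t v x := by
  calc (t - x) ^ 2 * vIntegrand t v x ^ 2 = (t - x) ^ 2 * vIntegrand t v x * vIntegrand t v x := by
        ring
    _ ≤ 1 * vIntegrand t v x :=
        mul_le_mul_of_nonneg_right (sq_sub_mul_vIntegrand_le_one t v x) (vIntegrand_nonneg t v x)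
    _ = vIntegrand t v x := one_mul _

/-- A bounded continuous minorant of `vIntegrand t 0`, increasing to it as `n → ∞`; it vanishes
at `x = t` like the junk value `vIntegrand t 0 t = 0⁻¹ = 0`. -/
noncomputable def truncBCF (t : ℝ) (n : ℕ) : ℝ →ᵇ ℝ :=
  have hε : 1 / ((n : ℝ) + 1) ≠ 0 := by positivity
  .ofNormedAddCommGroup (fun x => (t - x) ^ 2 * vIntegrand t (1 / ((n : ℝ) + 1)) x ^ 2)
    (by have := continuous_vIntegrand t hε; fun_prop) ((1 / ((n : ℝ) + 1)) ^ 2)⁻¹ fun x => by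
      rw [Real.norm_of_nonneg (by positivity)]
      exact (sq_sub_mul_vIntegrand_sq_le t _ x).trans (vIntegrand_le_inv_sq t x hε)

theorem truncBCF_apply (t : ℝ) (n : ℕ) (x : ℝ) :
    truncBCF t n x = (t - x) ^ 2 * vIntegrand t (1 / ((n : ℝ) + 1)) x ^ 2 := rfl

theorem truncBCF_le (t : ℝ) (n : ℕ) (x : ℝ) : truncBCF t n x ≤ vIntegrand t 0 x := by
  rw [truncBCF_apply]
  rcases (sq_nonneg (t - x)).eq_or_lt with hs | hs
  · simp [← hs, vIntegrand_nonneg]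
  · refine (sq_sub_mul_vIntegrand_sq_le t _ x).trans ?_
    unfold vIntegrand
    gcongr
    positivity

theorem monotone_truncBCF (t x : ℝ) : Monotone fun n => truncBCF t n x := by
  intro m n hmn
  simp only [truncBCF_apply]
  gcongr
  · exact vIntegrand_nonneg _ _ _
  · exact (strictAntiOn_vIntegrand t x).antitoneOn (mem_Ioi.2 (by positivity))
      (mem_Ioi.2 (by positivity)) (by gcongr)

theorem tendsto_truncBCF (t x : ℝ) :
    Tendsto (fun n => truncBCF t n x) atTop (𝓝 (vIntegrand t 0 x)) := by
  simp only [truncBCF_apply]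
  rcases eq_or_ne ((t - x) ^ 2) 0 with hs | hs
  · simp [vIntegrand, hs]
  · have hk : Tendsto (fun n : ℕ => vIntegrand t (1 / ((n : ℝ) + 1)) x) atTop
        (𝓝 (vIntegrand t 0 x)) :=
      (tendsto_const_nhds.add (tendsto_one_div_add_atTop_nhds_zero_nat.pow 2)).inv₀
        (by simpa using hs)
    convert (tendsto_const_nhds (x := (t - x) ^ 2)).mul (hk.pow 2) using 2
    simp only [vIntegrand, ne_eq, OfNat.ofNat_ne_zero, not_false_eq_true, zero_pow, add_zero]
    field_simp

theorem exists_one_lt_integral_truncBCF {ν : Measure ℝ} [IsFiniteMeasure ν] {t : ℝ}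
    (h : 1 < ∫ x, vIntegrand t 0 x ∂ν) : ∃ n, 1 < ∫ x, truncBCF t n x ∂ν := by
  have hint : Integrable (vIntegrand t 0) ν := by
    by_contra hni
    rw [integral_undef hni] at h
    linarith
  exact ((integral_tendsto_of_tendsto_of_monotone (fun n => (truncBCF t n).integrable ν) hint
    (ae_of_all _ fun x => monotone_truncBCF t x)
    (ae_of_all _ fun x => tendsto_truncBCF t x)).eventually_const_lt h).exists

theorem eventually_vF_lt {ν : Measure ℝ} [IsFiniteMeasure ν] [NeZero ν] {μ : ℕ → Measure ℝ}
    (hweak : ∀ f : ℝ →ᵇ ℝ, Tendsto (fun N => ∫ x, f x ∂μ N) atTop (𝓝 (∫ x, f x ∂ν)))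
    {t b : ℝ} (hpos : 0 < vF ν t) (hb : vF ν t < b) : ∀ᶠ N in atTop, vF (μ N) t < b := by
  obtain ⟨w, hw, hwb⟩ := exists_between hb
  have hw0 : 0 < w := hpos.trans hw
  filter_upwards [(hweak (vIntegrandBCF t hw0.ne')).eventually_lt_const
    (integral_lt_one_of_vF_lt hpos hw)] with N hN
  exact (vF_le hw0.le hN.le).trans_lt hwb

theorem eventually_lt_vF {ν : Measure ℝ} [IsFiniteMeasure ν] {μ : ℕ → Measure ℝ}
    [∀ N, IsProbabilityMeasure (μ N)]
    (hweak : ∀ f : ℝ →ᵇ ℝ, Tendsto (fun N => ∫ x, f x ∂μ N) atTop (𝓝 (∫ x, f x ∂ν)))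
    {t a : ℝ} (hint : ∀ᶠ N in atTop, Integrable (vIntegrand t 0) (μ N)) (ha : a < vF ν t) :
    ∀ᶠ N in atTop, a < vF (μ N) t := by
  rcases lt_or_ge a 0 with ha0 | ha0
  · exact Eventually.of_forall fun N => ha0.trans_le (vF_nonneg _ _)
  obtain ⟨w, haw, hw⟩ := exists_between ha
  have hw0 : 0 < w := ha0.trans_lt haw
  obtain ⟨n, hn⟩ :=
    exists_one_lt_integral_truncBCF (one_lt_integral_of_lt_vF le_rfl (hw0.trans hw))
  filter_upwards [hint, (hweak (truncBCF t n)).eventually_const_lt hn,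
    (hweak (vIntegrandBCF t hw0.ne')).eventually_const_lt (one_lt_integral_of_lt_vF hw0.le hw)]
    with N hintN htruncN hwN
  have h0 : 1 < ∫ x, vIntegrand t 0 x ∂μ N :=
    htruncN.trans_le (integral_mono ((truncBCF t n).integrable _) hintN (truncBCF_le t n))
  exact haw.trans_le (le_vF_of_one_lt_integral h0 hwN)

theorem stmt7_general
    (ν : Measure ℝ) [IsProbabilityMeasure ν]
    (J r : ℕ) (θ : Fin J → ℝ) (k : Fin J → ℕ)
    (β : ℕ → ℕ → ℝ) (μA : ℕ → Measure ℝ)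
    (hprob : ∀ N, IsProbabilityMeasure (μA N))
    (hdecomp : ∀ N, r ≤ N → μA N = (N : ℝ≥0∞)⁻¹ •
      ((∑ j, (k j : ℝ≥0∞) • Measure.dirac (θ j)) +
        ∑ i ∈ Finset.range (N - r), Measure.dirac (β N i)))
    (hweak : ∀ f : BoundedContinuousFunction ℝ ℝ,
      Tendsto (fun N => ∫ x, f x ∂(μA N)) atTop (𝓝 (∫ x, f x ∂ν)))
    (t : ℝ) (ht : t ∈ USet ν) :
    Tendsto (fun N => vF (μA N) t) atTop (𝓝 (vF ν t)) := by
  have hint : ∀ᶠ N in atTop, Integrable (vIntegrand t 0) (μA N) := by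
    filter_upwards [eventually_ge_atTop (max r 1)] with N hN
    have hN0 : (N : ℝ≥0∞) ≠ 0 := by simpa using Nat.one_le_iff_ne_zero.1 (le_of_max_le_right hN)
    rw [hdecomp N (le_of_max_le_left hN)]
    exact integrable_smul_sum_dirac_add_sum_dirac _ (ENNReal.inv_ne_top.2 hN0) _ _
      (fun j => ENNReal.natCast_ne_top (k j)) _ _ _
  exact tendsto_order.2
    ⟨fun a ha => eventually_lt_vF hweak hint ha, fun b hb => eventually_vF_lt hweak ht hb⟩

/-- for every `t ∈ U_ν`, `v_N(t) → v_ν(t)` as `N → ∞`. -/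
theorem stmt7
    (ν : Measure ℝ) [IsProbabilityMeasure ν] (hcomp : IsCompact (MeasSupp ν))
    (J r : ℕ) (θ : Fin J → ℝ) (k : Fin J → ℕ)
    (hθanti : StrictAnti θ) (hθsupp : ∀ j, θ j ∉ MeasSupp ν)
    (hkpos : ∀ j, 0 < k j) (hkr : ∑ j, k j = r)
    (β : ℕ → ℕ → ℝ) (μA : ℕ → Measure ℝ)
    (hprob : ∀ N, IsProbabilityMeasure (μA N))
    (hdecomp : ∀ N, r ≤ N → μA N = (N : ℝ≥0∞)⁻¹ •
      ((∑ j, (k j : ℝ≥0∞) • Measure.dirac (θ j)) +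
        ∑ i ∈ Finset.range (N - r), Measure.dirac (β N i)))
    (hweak : ∀ f : BoundedContinuousFunction ℝ ℝ,
      Tendsto (fun N => ∫ x, f x ∂(μA N)) atTop (𝓝 (∫ x, f x ∂ν)))
    (hβ : ∀ ε > 0, ∀ᶠ N in atTop, ∀ i ∈ Finset.range (N - r),
      Metric.infDist (β N i) (MeasSupp ν) < ε)
    (t : ℝ) (ht : t ∈ USet ν) :
    Tendsto (fun N => vF (μA N) t) atTop (𝓝 (vF ν t)) :=
  stmt7_general ν J r θ k β μA hprob hdecomp hweak t ht
end

section
/- Let t_0 ∉ supp(ν) ∪ Θ be such that ∫ dν(x)/(t_0−x)² = 1 and ∫ dν(x)/(t_0−x)³ ≠ 0. Then for ε > 0 small enough and all N large enough there exists one and only one t_0(N) ∈ ]t_0−ε, t_0+ε[ with ∫ dμ_{A_N}(x)/(t_0(N)−x)² = 1, and it satisfies the fixed-point identity t_0(N) = t_0 + f_N(t_0(N)), where f_N(t) = h(t)·[ ((N−r)/N) ∫ dν̂_N(x)/(t−x)² − ∫ dν(x)/(t−x)² + (1/N) Σ_{j=1}^J k_j/(t−θ_j)² ], h(t) = 1 /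 ∫ ((t−x) + (t_0−x)) / ((t−x)²(t_0−x)²) dν(x), and there exist constants 0 < K_1(ε) < K_2(ε) with K_1(ε) < |h(t)| < K_2(ε) for all t ∈ ]t_0−ε, t_0+ε[. -/
open MeasureTheory Filter Topology Set
open scoped ENNReal

/-- `h(t) = 1 / ∫ ((t−x)+(t₀−x))/((t−x)²(t₀−x)²) dν(x)`. -/
noncomputable def hWeight (ν : Measure ℝ) (t₀ t : ℝ) : ℝ :=
  (∫ x, ((t - x) + (t₀ - x)) / ((t - x) ^ 2 * (t₀ - x) ^ 2) ∂ν)⁻¹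

/-- `f_N(t) = h(t)·[((N−r)/N)∫dν̂_N(x)/(t−x)² − ∫dν(x)/(t−x)² + (1/N)Σ_j k_j/(t−θ_j)²]`. -/
noncomputable def fN (ν : Measure ℝ) {J : ℕ} (r : ℕ) (θ : Fin J → ℝ) (k : Fin J → ℕ)
    (β : ℕ → ℕ → ℝ) (t₀ : ℝ) (N : ℕ) (t : ℝ) : ℝ :=
  hWeight ν t₀ t *
    (((N - r : ℕ) : ℝ) / N * (∫ x, ((t - x) ^ 2)⁻¹ ∂(hatNu r β N))
      - (∫ x, ((t - x) ^ 2)⁻¹ ∂ν)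
      + (N : ℝ)⁻¹ * ∑ j, (k j : ℝ) / (t - θ j) ^ 2)

/-! Since `t₀` lies at positive distance from `supp ν ∪ Θ`, and eventually also from all the
`β_i(N)`, the kernel `1/(t - x)²` and its difference quotient
`((t - x) + (t' - x)) / ((t - x)² (t' - x)²)` may be replaced, for `t, t'` near `t₀`, by bounded
Lipschitz truncations. Weak convergence then gives convergence of the truncated integrals, uniformly
in `(t, t')` near `(t₀, t₀)` by equi-Lipschitz continuity. At `(t₀, t₀)` the difference quotient
integrates to `2 ∫ dν/(t₀ - x)³ ≠ 0`, so near `t₀` the difference quotients of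
`t ↦ ∫ dμ_{A_N}/(t - x)²` stay close to this nonzero number: the function crosses `1` exactly once,
and the secant identity between `t₀(N)` and `t₀` is the fixed-point equation, `h(t)` being the
inverse of the limiting difference quotient. -/

open Metric
open scoped NNReal BoundedContinuousFunction

section BoundedLipschitz

variable {α β : Type*} [PseudoMetricSpace α]

def IsBoundedLipschitz (f : α → ℝ) : Prop :=
  (∃ C : ℝ≥0, ∀ x, |f x| ≤ C) ∧ ∃ K : ℝ≥0, LipschitzWith K f

namespace IsBoundedLipschitz

variable {f g : α → ℝ}

lemma add (hf : IsBoundedLipschitz f) (hg : IsBoundedLipschitz g) :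
    IsBoundedLipschitz fun x => f x + g x := by
  obtain ⟨⟨Cf, hCf⟩, Kf, hKf⟩ := hf
  obtain ⟨⟨Cg, hCg⟩, Kg, hKg⟩ := hg
  refine ⟨⟨Cf + Cg, fun x => (abs_add_le _ _).trans ?_⟩, Kf + Kg, hKf.add hKg⟩
  push_cast
  exact add_le_add (hCf x) (hCg x)

lemma mul (hf : IsBoundedLipschitz f) (hg : IsBoundedLipschitz g) :
    IsBoundedLipschitz fun x => f x * g x := by
  obtain ⟨⟨Cf, hCf⟩, Kf, hKf⟩ := hf
  obtain ⟨⟨Cg, hCg⟩, Kg, hKg⟩ := hg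
  refine ⟨⟨Cf * Cg, fun x => ?_⟩, Cf * Kg + Cg * Kf, LipschitzWith.of_dist_le_mul fun x y => ?_⟩
  · rw [abs_mul, NNReal.coe_mul]
    exact mul_le_mul (hCf x) (hCg x) (abs_nonneg _) Cf.2
  · rw [Real.dist_eq]
    calc |f x * g x - f y * g y| = |f x * (g x - g y) + g y * (f x - f y)| := by congr 1; ring
      _ ≤ |f x| * dist (g x) (g y) + |g y| * dist (f x) (f y) := by
          rw [Real.dist_eq, Real.dist_eq, ← abs_mul, ← abs_mul]; exact abs_add_le _ _
      _ ≤ Cf * (Kg * dist x y) + Cg * (Kf * dist x y) := by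
          gcongr
          exacts [hCf x, hKg.dist_le_mul x y, hCg y, hKf.dist_le_mul x y]
      _ = ↑(Cf * Kg + Cg * Kf) * dist x y := by push_cast; ring

lemma comp [PseudoMetricSpace β] (hf : IsBoundedLipschitz f) {g : β → α} {K : ℝ≥0}
    (hg : LipschitzWith K g) : IsBoundedLipschitz (f ∘ g) := by
  obtain ⟨⟨C, hC⟩, Kf, hKf⟩ := hf
  exact ⟨⟨C, fun x => hC (g x)⟩, Kf * K, hKf.comp hg⟩

lemma exists_boundedContinuousFunction_comp [TopologicalSpace β] (hf : IsBoundedLipschitz f)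
    {g : β → α} (hg : Continuous g) : ∃ F : β →ᵇ ℝ, ⇑F = fun x => f (g x) := by
  obtain ⟨⟨C, hC⟩, K, hK⟩ := hf
  exact ⟨.ofNormedAddCommGroup _ (hK.continuous.comp hg) C fun x => hC (g x), rfl⟩

lemma integrable_comp [TopologicalSpace β] [MeasurableSpace β] [OpensMeasurableSpace β]
    (hf : IsBoundedLipschitz f) {g : β → α} (hg : Continuous g) (μ : Measure β)
    [IsFiniteMeasure μ] : Integrable (fun x => f (g x)) μ := by
  obtain ⟨F, hF⟩ := hf.exists_boundedContinuousFunction_comp hg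
  rw [← hF]
  exact F.integrable μ

lemma tendsto_integral_comp [TopologicalSpace β] [MeasurableSpace β] (hf : IsBoundedLipschitz f)
    {g : β → α} (hg : Continuous g) {ι : Type*} {l : Filter ι} {μ : ι → Measure β}
    {ν : Measure β} (hweak : ∀ F : β →ᵇ ℝ,
      Tendsto (fun i => ∫ x, F x ∂(μ i)) l (𝓝 (∫ x, F x ∂ν))) :
    Tendsto (fun i => ∫ x, f (g x) ∂(μ i)) l (𝓝 (∫ x, f (g x) ∂ν)) := by
  obtain ⟨F, hF⟩ := hf.exists_boundedContinuousFunction_comp hg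
  rw [← hF]
  exact hweak F

end IsBoundedLipschitz

lemma lipschitzWith_integral {Ω : Type*} [MeasurableSpace Ω] {f : α → Ω → ℝ} {K : ℝ≥0}
    (μ : Measure Ω) [IsProbabilityMeasure μ] (hf : ∀ x, LipschitzWith K (f · x))
    (hint : ∀ a, Integrable (f a) μ) : LipschitzWith K fun a => ∫ x, f a x ∂μ := by
  refine LipschitzWith.of_dist_le_mul fun a b => ?_
  have := norm_integral_le_of_norm_le_const (μ := μ) (f := fun x => f a x - f b x)
    (Eventually.of_forall fun x => (dist_eq_norm (f a x) (f b x)) ▸ (hf x).dist_le_mul a b)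
  rwa [integral_sub (hint a) (hint b), ← dist_eq_norm, probReal_univ, mul_one] at this

lemma IsBoundedLipschitz.exists_lipschitzWith_integral {E : Type*} [SeminormedAddCommGroup E]
    {Φ : E → ℝ} (hΦ : IsBoundedLipschitz Φ) {s : ℝ → E} (hs : Continuous s) :
    ∃ K : ℝ≥0, ∀ μ : Measure ℝ, IsProbabilityMeasure μ →
      LipschitzWith K fun z => ∫ x, Φ (z - s x) ∂μ := by
  obtain ⟨K, hK⟩ := hΦ.2
  refine ⟨K, fun μ _ => lipschitzWith_integral μ (fun x => ?_) fun z =>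
    hΦ.integrable_comp (continuous_const.sub hs) μ⟩
  exact LipschitzWith.of_dist_le_mul fun z w => by
    simpa [dist_sub_right] using hK.dist_le_mul (z - s x) (w - s x)

end BoundedLipschitz

lemma tendstoUniformlyOn_of_lipschitzWith {X ι : Type*} [PseudoMetricSpace X] {l : Filter ι}
    {F : ι → X → ℝ} {f : X → ℝ} {K : ℝ≥0} {S : Set X} (hS : IsCompact S)
    (hF : ∀ i, LipschitzWith K (F i)) (h : ∀ x ∈ S, Tendsto (fun i => F i x) l (𝓝 (f x))) :
    TendstoUniformlyOn F f l S := by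
  have heq : EquicontinuousOn F S :=
    (LipschitzWith.uniformEquicontinuous F K hF).equicontinuous.equicontinuousOn S
  have := (EquicontinuousOn.tendsto_uniformOnFun_iff_pi' (𝔖 := {S}) (by simpa using hS)
    (by simpa using heq) l f).2 (tendsto_pi_nhds.2 fun x => h x (by simpa using x.2))
  exact UniformOnFun.tendsto_iff_tendstoUniformlyOn.1 this S rfl

section TruncatedKernels

noncomputable def truncInv (ρ y : ℝ) : ℝ := y / max |y| ρ ^ 2

noncomputable def secantKernel (ρ : ℝ) (p : ℝ × ℝ) : ℝ :=
  truncInv ρ p.1 * truncInv ρ p.2 * (truncInv ρ p.1 + truncInv ρ p.2)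

lemma abs_max_abs_sub_max_abs_le (y z ρ : ℝ) : |max |y| ρ - max |z| ρ| ≤ |y - z| :=
  (abs_max_sub_max_le_abs _ _ _).trans (abs_abs_sub_abs_le y z)

variable {ρ : ℝ}

lemma isBoundedLipschitz_inv_max_abs (hρ : 0 < ρ) :
    IsBoundedLipschitz fun y : ℝ => (max |y| ρ)⁻¹ := by
  have hm (y : ℝ) : ρ ≤ max |y| ρ := le_max_right _ _
  have hpos (y : ℝ) : 0 < max |y| ρ := hρ.trans_le (hm y)
  refine ⟨⟨⟨ρ⁻¹, by positivity⟩, fun y => ?_⟩, ⟨(ρ ^ 2)⁻¹, by positivity⟩,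
    LipschitzWith.of_dist_le_mul fun y z => ?_⟩
  · rw [abs_of_pos (inv_pos.2 (hpos y))]
    exact inv_anti₀ hρ (hm y)
  · change dist _ _ ≤ (ρ ^ 2)⁻¹ * dist y z
    rw [Real.dist_eq, Real.dist_eq, inv_sub_inv (hpos y).ne' (hpos z).ne', abs_div,
      abs_of_pos (mul_pos (hpos y) (hpos z)), div_le_iff₀ (mul_pos (hpos y) (hpos z))]
    calc |max |z| ρ - max |y| ρ| ≤ |y - z| :=
          (abs_max_abs_sub_max_abs_le z y ρ).trans_eq (abs_sub_comm z y)
      _ = (ρ ^ 2)⁻¹ * |y - z| * (ρ * ρ) := by field_simp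
      _ ≤ (ρ ^ 2)⁻¹ * |y - z| * (max |y| ρ * max |z| ρ) := by gcongr <;> exact hm _

lemma isBoundedLipschitz_mul_inv_max_abs (hρ : 0 < ρ) :
    IsBoundedLipschitz fun y : ℝ => y * (max |y| ρ)⁻¹ := by
  have hm (y : ℝ) : ρ ≤ max |y| ρ := le_max_right _ _
  have hpos (y : ℝ) : 0 < max |y| ρ := hρ.trans_le (hm y)
  have hle (y : ℝ) : |y * (max |y| ρ)⁻¹| ≤ 1 := by
    rw [abs_mul, abs_inv, abs_of_pos (hpos y), ← div_eq_mul_inv, div_le_one (hpos y)]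
    exact le_max_left _ _
  refine ⟨⟨1, hle⟩, ⟨2 / ρ, by positivity⟩, LipschitzWith.of_dist_le_mul fun y z => ?_⟩
  have hinv (y : ℝ) : |(max |y| ρ)⁻¹| ≤ ρ⁻¹ := by
    rw [abs_of_pos (inv_pos.2 (hpos y))]; exact inv_anti₀ hρ (hm y)
  have key : y * (max |y| ρ)⁻¹ - z * (max |z| ρ)⁻¹ = (y - z) * (max |y| ρ)⁻¹
      + z * (max |z| ρ)⁻¹ * ((max |z| ρ - max |y| ρ) * (max |y| ρ)⁻¹) := by
    field_simp [(hpos y).ne', (hpos z).ne']; ring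
  change dist _ _ ≤ 2 / ρ * dist y z
  rw [Real.dist_eq, Real.dist_eq, key]
  calc _ ≤ |y - z| * ρ⁻¹ + 1 * (|y - z| * ρ⁻¹) := by
        refine (abs_add_le _ _).trans (add_le_add ?_ ?_)
        · rw [abs_mul]; gcongr; exact hinv y
        · rw [abs_mul, abs_mul (_ - _)]
          exact mul_le_mul (hle z) (mul_le_mul (abs_max_abs_sub_max_abs_le z y ρ |>.trans_eq
            (abs_sub_comm z y)) (hinv y) (abs_nonneg _) (abs_nonneg _)) (by positivity) zero_le_one
    _ = 2 / ρ * |y - z| := by ring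

lemma isBoundedLipschitz_truncInv (hρ : 0 < ρ) : IsBoundedLipschitz (truncInv ρ) := by
  convert (isBoundedLipschitz_mul_inv_max_abs hρ).mul (isBoundedLipschitz_inv_max_abs hρ) using 1
  funext y
  rw [truncInv]
  ring

lemma isBoundedLipschitz_truncInv_sq (hρ : 0 < ρ) :
    IsBoundedLipschitz fun y => truncInv ρ y ^ 2 := by
  simpa only [sq] using (isBoundedLipschitz_truncInv hρ).mul (isBoundedLipschitz_truncInv hρ)

lemma isBoundedLipschitz_secantKernel (hρ : 0 < ρ) : IsBoundedLipschitz (secantKernel ρ) := by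
  have h₁ := (isBoundedLipschitz_truncInv hρ).comp (LipschitzWith.prod_fst (β := ℝ))
  have h₂ := (isBoundedLipschitz_truncInv hρ).comp (LipschitzWith.prod_snd (α := ℝ))
  exact (h₁.mul h₂).mul (h₁.add h₂)

lemma truncInv_of_le (hρ : 0 < ρ) {y : ℝ} (hy : ρ ≤ |y|) : truncInv ρ y = y⁻¹ := by
  have hy₀ : y ≠ 0 := abs_pos.1 (hρ.trans_le hy)
  rw [truncInv, max_eq_left hy, sq_abs]
  field_simp

variable {a b : ℝ}

lemma truncInv_sq_sub_truncInv_sq (hρ : 0 < ρ) (ha : ρ ≤ |a|) (hb : ρ ≤ |b|) :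
    truncInv ρ a ^ 2 - truncInv ρ b ^ 2 = (b - a) * secantKernel ρ (a, b) := by
  have ha₀ : a ≠ 0 := abs_pos.1 (hρ.trans_le ha)
  have hb₀ : b ≠ 0 := abs_pos.1 (hρ.trans_le hb)
  simp only [secantKernel, truncInv_of_le hρ ha, truncInv_of_le hρ hb]
  field_simp
  ring

lemma secantKernel_eq_div (hρ : 0 < ρ) (ha : ρ ≤ |a|) (hb : ρ ≤ |b|) :
    secantKernel ρ (a, b) = (a + b) / (a ^ 2 * b ^ 2) := by
  have ha₀ : a ≠ 0 := abs_pos.1 (hρ.trans_le ha)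
  have hb₀ : b ≠ 0 := abs_pos.1 (hρ.trans_le hb)
  simp only [secantKernel, truncInv_of_le hρ ha, truncInv_of_le hρ hb]
  field_simp
  ring

lemma secantKernel_diag (hρ : 0 < ρ) (ha : ρ ≤ |a|) :
    secantKernel ρ (a, a) = 2 * (a ^ 3)⁻¹ := by
  rw [secantKernel_eq_div hρ ha ha]
  have ha₀ : a ≠ 0 := abs_pos.1 (hρ.trans_le ha)
  field_simp
  ring

end TruncatedKernels

section TruncatedIntegrals

variable (ρ : ℝ) (μ : Measure ℝ)

noncomputable def truncInvSqIntegral (t : ℝ) : ℝ := ∫ x, truncInv ρ (t - x) ^ 2 ∂μ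

noncomputable def secantIntegral (z : ℝ × ℝ) : ℝ := ∫ x, secantKernel ρ (z - (x, x)) ∂μ

variable {ρ μ} {t t' : ℝ}

lemma exists_lipschitzWith_truncInvSqIntegral (hρ : 0 < ρ) :
    ∃ K : ℝ≥0, ∀ μ : Measure ℝ, IsProbabilityMeasure μ →
      LipschitzWith K (truncInvSqIntegral ρ μ) :=
  (isBoundedLipschitz_truncInv_sq hρ).exists_lipschitzWith_integral continuous_id

lemma exists_lipschitzWith_secantIntegral (hρ : 0 < ρ) :
    ∃ K : ℝ≥0, ∀ μ : Measure ℝ, IsProbabilityMeasure μ → LipschitzWith K (secantIntegral ρ μ) :=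
  (isBoundedLipschitz_secantKernel hρ).exists_lipschitzWith_integral (by fun_prop)

lemma integral_inv_sq_eq_truncInvSqIntegral (hρ : 0 < ρ) (ht : ∀ᵐ x ∂μ, ρ ≤ |t - x|) :
    ∫ x, ((t - x) ^ 2)⁻¹ ∂μ = truncInvSqIntegral ρ μ t :=
  integral_congr_ae <| ht.mono fun x hx => by simp only [truncInv_of_le hρ hx, inv_pow]

lemma truncInvSqIntegral_sub [IsFiniteMeasure μ] (hρ : 0 < ρ) (ht : ∀ᵐ x ∂μ, ρ ≤ |t - x|)
    (ht' : ∀ᵐ x ∂μ, ρ ≤ |t' - x|) :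
    truncInvSqIntegral ρ μ t - truncInvSqIntegral ρ μ t' =
      (t' - t) * secantIntegral ρ μ (t, t') := by
  have hint (s : ℝ) : Integrable (fun x => truncInv ρ (s - x) ^ 2) μ :=
    (isBoundedLipschitz_truncInv_sq hρ).integrable_comp (continuous_sub_left s) μ
  rw [truncInvSqIntegral, truncInvSqIntegral, ← integral_sub (hint t) (hint t'), secantIntegral,
    ← integral_const_mul]
  refine integral_congr_ae <| (ht.and ht').mono fun x hx => ?_
  simp only [truncInv_sq_sub_truncInv_sq hρ hx.1 hx.2, Prod.mk_sub_mk, sub_sub_sub_cancel_right]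

lemma secantIntegral_diag (hρ : 0 < ρ) (ht : ∀ᵐ x ∂μ, ρ ≤ |t - x|) :
    secantIntegral ρ μ (t, t) = 2 * ∫ x, ((t - x) ^ 3)⁻¹ ∂μ := by
  rw [secantIntegral, ← integral_const_mul]
  exact integral_congr_ae <| ht.mono fun x hx => secantKernel_diag hρ hx

lemma hWeight_eq_inv_secantIntegral (hρ : 0 < ρ) {ν : Measure ℝ} {t₀ : ℝ}
    (ht : ∀ᵐ x ∂ν, ρ ≤ |t - x|) (ht₀ : ∀ᵐ x ∂ν, ρ ≤ |t₀ - x|) :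
    hWeight ν t₀ t = (secantIntegral ρ ν (t, t₀))⁻¹ := by
  rw [hWeight, secantIntegral]
  congr 1
  exact integral_congr_ae <| (ht.and ht₀).mono fun x hx =>
    (secantKernel_eq_div hρ hx.1 hx.2).symm

variable {ι : Type*} {l : Filter ι} {μ : ι → Measure ℝ} {ν : Measure ℝ}

lemma tendsto_truncInvSqIntegral (hρ : 0 < ρ) (hweak : ∀ F : ℝ →ᵇ ℝ,
    Tendsto (fun i => ∫ x, F x ∂(μ i)) l (𝓝 (∫ x, F x ∂ν))) (t : ℝ) :
    Tendsto (fun i => truncInvSqIntegral ρ (μ i) t) l (𝓝 (truncInvSqIntegral ρ ν t)) :=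
  (isBoundedLipschitz_truncInv_sq hρ).tendsto_integral_comp (continuous_sub_left t) hweak

lemma tendstoUniformlyOn_secantIntegral (hρ : 0 < ρ) (hμ : ∀ i, IsProbabilityMeasure (μ i))
    (hweak : ∀ F : ℝ →ᵇ ℝ, Tendsto (fun i => ∫ x, F x ∂(μ i)) l (𝓝 (∫ x, F x ∂ν)))
    {S : Set (ℝ × ℝ)} (hS : IsCompact S) :
    TendstoUniformlyOn (fun i => secantIntegral ρ (μ i)) (secantIntegral ρ ν) l S := by
  obtain ⟨K, hK⟩ := exists_lipschitzWith_secantIntegral hρ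
  exact tendstoUniformlyOn_of_lipschitzWith hS (fun i => hK (μ i) (hμ i)) fun z _ =>
    (isBoundedLipschitz_secantKernel hρ).tendsto_integral_comp (by fun_prop) hweak

end TruncatedIntegrals

lemma inv_bounds_of_abs_sub_lt {u I : ℝ} (hI : I ≠ 0) (h : |u - I| < |I| / 2) :
    (2 * |I|)⁻¹ < |u⁻¹| ∧ |u⁻¹| < 2 / |I| := by
  have hI' : 0 < |I| := abs_pos.2 hI
  have hlow : |I| / 2 < |u| := by linarith [abs_sub_abs_le_abs_sub I u, abs_sub_comm u I]
  have hup : |u| < 2 * |I| := by linarith [abs_sub_abs_le_abs_sub u I]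
  rw [abs_inv]
  constructor
  · exact inv_strictAnti₀ (by linarith) hup
  · simpa using inv_strictAnti₀ (by positivity) hlow

lemma sq_div_two_lt_mul_of_abs_sub_lt {u I : ℝ} (hI : I ≠ 0) (h : |u - I| < |I| / 2) :
    I ^ 2 / 2 < u * I := by
  have := abs_lt.1 ((abs_mul (u - I) I).trans_lt (mul_lt_mul_of_pos_right h (abs_pos.2 hI)))
  nlinarith [abs_mul_abs_self I]

lemma exists_unique_eq_of_secant {g : ℝ → ℝ} {Φ : ℝ × ℝ → ℝ} {c ε I y : ℝ} (hε : 0 < ε)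
    (hI : I ≠ 0) (hg : Continuous g)
    (hsec : ∀ t ∈ Ioo (c - ε) (c + ε), ∀ t' ∈ Ioo (c - ε) (c + ε),
      g t - g t' = (t' - t) * Φ (t, t'))
    (hΦ : ∀ t ∈ Ioo (c - ε) (c + ε), ∀ t' ∈ Ioo (c - ε) (c + ε), |Φ (t, t') - I| < |I| / 2)
    (hy : |g c - y| < ε / 2 * |I| / 2) :
    ∃ t ∈ Ioo (c - ε) (c + ε), g t = y ∧ ∀ t' ∈ Ioo (c - ε) (c + ε), g t' = y → t' = t := by
  have hpos (t) (ht : t ∈ Ioo (c - ε) (c + ε)) (t') (ht' : t' ∈ Ioo (c - ε) (c + ε)) :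
      I ^ 2 / 2 < Φ (t, t') * I :=
    sq_div_two_lt_mul_of_abs_sub_lt hI (hΦ t ht t' ht')
  have hc : c ∈ Ioo (c - ε) (c + ε) := ⟨by linarith, by linarith⟩
  have hcr : c + ε / 2 ∈ Ioo (c - ε) (c + ε) := ⟨by linarith, by linarith⟩
  have hcl : c - ε / 2 ∈ Ioo (c - ε) (c + ε) := ⟨by linarith, by linarith⟩
  have hgr : (g (c + ε / 2) - y) * I = (g c - y) * I - ε / 2 * (Φ (c + ε / 2, c) * I) := by
    linear_combination I * hsec _ hcr c hc
  have hgl : (g (c - ε / 2) - y) * I = (g c - y) * I + ε / 2 * (Φ (c - ε / 2, c) * I) := by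
    linear_combination I * hsec _ hcl c hc
  have hΦr := mul_lt_mul_of_pos_left (hpos _ hcr c hc) (half_pos hε)
  have hΦl := mul_lt_mul_of_pos_left (hpos _ hcl c hc) (half_pos hε)
  have hyI := abs_lt.1 ((abs_mul (g c - y) I).trans_lt
    (mul_lt_mul_of_pos_right hy (abs_pos.2 hI)))
  have hII : ε / 2 * |I| / 2 * |I| = ε / 2 * (I ^ 2 / 2) := by
    rw [sq, ← abs_mul_abs_self I]; ring
  rw [hII] at hyI
  -- the sign of `I` is unknown, so the intermediate value theorem is applied to `(g - y) * I`
  obtain ⟨t, ht, hgt⟩ : ∃ t ∈ Icc (c - ε / 2) (c + ε / 2), (g t - y) * I = 0 :=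
    intermediate_value_Icc' (f := fun t => (g t - y) * I) (by linarith)
      (by fun_prop : Continuous fun t => (g t - y) * I).continuousOn
      ⟨by linarith, by linarith⟩
  have htε : t ∈ Ioo (c - ε) (c + ε) := ⟨by linarith [ht.1], by linarith [ht.2]⟩
  have hgt : g t = y := sub_eq_zero.1 ((mul_eq_zero.1 hgt).resolve_right hI)
  refine ⟨t, htε, hgt, fun s hs hgs => ?_⟩
  have hΦ₀ : Φ (s, t) ≠ 0 := fun h => by
    have := hpos s hs t htε
    rw [h, zero_mul] at this
    exact (not_lt.2 (by positivity)) this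
  have := hsec s hs t htε
  rw [hgt, hgs, sub_self, eq_comm, mul_eq_zero] at this
  exact (sub_eq_zero.1 (this.resolve_right hΦ₀)).symm

section Window

variable {ρ t t' t₀ ε : ℝ}

lemma abs_sub_le_of_mem_Ioo (ht : t ∈ Ioo (t₀ - ε) (t₀ + ε)) (hερ : ε ≤ ρ) : |t - t₀| ≤ ρ :=
  abs_le.2 ⟨by linarith [ht.1], by linarith [ht.2]⟩

lemma mk_mem_closedBall_of_mem_Ioo {ε₀ : ℝ} (ht : t ∈ Ioo (t₀ - ε) (t₀ + ε))
    (ht' : t' ∈ Ioo (t₀ - ε) (t₀ + ε)) (hεε₀ : ε ≤ ε₀) : (t, t') ∈ closedBall (t₀, t₀) ε₀ := by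
  rw [← closedBall_prod_same, Real.closedBall_eq_Icc]
  exact ⟨⟨by linarith [ht.1], by linarith [ht.2]⟩, ⟨by linarith [ht'.1], by linarith [ht'.2]⟩⟩

lemma ae_le_abs_sub {μ : Measure ℝ} (hμ : ∀ᵐ x ∂μ, 2 * ρ ≤ |t₀ - x|) (ht : |t - t₀| ≤ ρ) :
    ∀ᵐ x ∂μ, ρ ≤ |t - x| :=
  hμ.mono fun x hx => by linarith [abs_sub_le t₀ t x, abs_sub_comm t t₀]

end Window

lemma eq_add_hWeight_mul {ρ t t₀ : ℝ} (hρ : 0 < ρ) {ν : Measure ℝ} [IsFiniteMeasure ν]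
    (ht : ∀ᵐ x ∂ν, ρ ≤ |t - x|) (ht₀ : ∀ᵐ x ∂ν, ρ ≤ |t₀ - x|)
    (hF : secantIntegral ρ ν (t, t₀) ≠ 0) (h2 : ∫ x, ((t₀ - x) ^ 2)⁻¹ ∂ν = 1) :
    t = t₀ + hWeight ν t₀ t * (1 - ∫ x, ((t - x) ^ 2)⁻¹ ∂ν) := by
  have hsub := truncInvSqIntegral_sub hρ ht ht₀
  rw [hWeight_eq_inv_secantIntegral hρ ht ht₀, ← h2, integral_inv_sq_eq_truncInvSqIntegral hρ ht₀,
    integral_inv_sq_eq_truncInvSqIntegral hρ ht,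
    show truncInvSqIntegral ρ ν t₀ - truncInvSqIntegral ρ ν t
      = (t - t₀) * secantIntegral ρ ν (t, t₀) by linarith]
  field_simp
  ring

lemma exists_unique_root_of_close {ν μ : Measure ℝ} [IsProbabilityMeasure ν]
    [IsProbabilityMeasure μ] {ρ t₀ ε I : ℝ} (hρ : 0 < ρ) (hε : 0 < ε) (hερ : ε ≤ ρ) (hI : I ≠ 0)
    (hνfar : ∀ᵐ x ∂ν, 2 * ρ ≤ |t₀ - x|) (hμfar : ∀ᵐ x ∂μ, 2 * ρ ≤ |t₀ - x|)
    (hFν : ∀ t ∈ Ioo (t₀ - ε) (t₀ + ε), ∀ t' ∈ Ioo (t₀ - ε) (t₀ + ε),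
      |secantIntegral ρ ν (t, t') - I| < |I| / 4)
    (hFμ : ∀ t ∈ Ioo (t₀ - ε) (t₀ + ε), ∀ t' ∈ Ioo (t₀ - ε) (t₀ + ε),
      |secantIntegral ρ ν (t, t') - secantIntegral ρ μ (t, t')| < |I| / 4)
    (hG : |truncInvSqIntegral ρ μ t₀ - 1| < ε / 2 * |I| / 2)
    (h2 : ∫ x, ((t₀ - x) ^ 2)⁻¹ ∂ν = 1) :
    ∃ tN ∈ Ioo (t₀ - ε) (t₀ + ε), (∫ x, ((tN - x) ^ 2)⁻¹ ∂μ) = 1 ∧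
      (∀ t' ∈ Ioo (t₀ - ε) (t₀ + ε), (∫ x, ((t' - x) ^ 2)⁻¹ ∂μ) = 1 → t' = tN) ∧
      tN = t₀ + hWeight ν t₀ tN * (1 - ∫ x, ((tN - x) ^ 2)⁻¹ ∂ν) := by
  have hnear {m : Measure ℝ} (hm : ∀ᵐ x ∂m, 2 * ρ ≤ |t₀ - x|) {t : ℝ}
      (ht : t ∈ Ioo (t₀ - ε) (t₀ + ε)) : ∀ᵐ x ∂m, ρ ≤ |t - x| :=
    ae_le_abs_sub hm (abs_sub_le_of_mem_Ioo ht hερ)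
  have ht₀ : t₀ ∈ Ioo (t₀ - ε) (t₀ + ε) := ⟨by linarith, by linarith⟩
  obtain ⟨K, hK⟩ := exists_lipschitzWith_truncInvSqIntegral hρ
  obtain ⟨tN, htN, hroot, huniq⟩ := exists_unique_eq_of_secant hε hI (hK μ inferInstance).continuous
    (fun t ht t' ht' => truncInvSqIntegral_sub hρ (hnear hμfar ht) (hnear hμfar ht'))
    (fun t ht t' ht' => by
      linarith [abs_sub_le (secantIntegral ρ μ (t, t')) (secantIntegral ρ ν (t, t')) I,
        abs_sub_comm (secantIntegral ρ μ (t, t')) (secantIntegral ρ ν (t, t')),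
        hFν t ht t' ht', hFμ t ht t' ht']) hG
  have hconv {t : ℝ} (ht : t ∈ Ioo (t₀ - ε) (t₀ + ε)) :
      ∫ x, ((t - x) ^ 2)⁻¹ ∂μ = truncInvSqIntegral ρ μ t :=
    integral_inv_sq_eq_truncInvSqIntegral hρ (hnear hμfar ht)
  have hF : secantIntegral ρ ν (tN, t₀) ≠ 0 := fun h0 => by
    have := hFν tN htN t₀ ht₀
    rw [h0, zero_sub, abs_neg] at this
    linarith [abs_pos.2 hI]
  exact ⟨tN, htN, (hconv htN).trans hroot, fun t' ht' h => huniq t' ht' ((hconv ht').symm.trans h),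
    eq_add_hWeight_mul hρ (hnear hνfar htN) (hnear hνfar ht₀) hF h2⟩

theorem exists_window_eventually_unique_root {ν : Measure ℝ} [IsProbabilityMeasure ν]
    {μ : ℕ → Measure ℝ}
    (hμ : ∀ N, IsProbabilityMeasure (μ N))
    (hweak : ∀ F : ℝ →ᵇ ℝ, Tendsto (fun N => ∫ x, F x ∂(μ N)) atTop (𝓝 (∫ x, F x ∂ν)))
    {ρ t₀ : ℝ} (hρ : 0 < ρ) (hνfar : ∀ᵐ x ∂ν, 2 * ρ ≤ |t₀ - x|)
    (hμfar : ∀ᶠ N in atTop, ∀ᵐ x ∂(μ N), 2 * ρ ≤ |t₀ - x|)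
    (h2 : ∫ x, ((t₀ - x) ^ 2)⁻¹ ∂ν = 1) (h3 : ∫ x, ((t₀ - x) ^ 3)⁻¹ ∂ν ≠ 0) :
    ∃ ε₀ > (0 : ℝ), ∀ ε, 0 < ε → ε ≤ ε₀ →
      (∃ K₁ K₂ : ℝ, 0 < K₁ ∧ ∀ t ∈ Ioo (t₀ - ε) (t₀ + ε),
        K₁ < |hWeight ν t₀ t| ∧ |hWeight ν t₀ t| < K₂) ∧
      ∀ᶠ N in atTop, ∃ tN ∈ Ioo (t₀ - ε) (t₀ + ε),
        (∫ x, ((tN - x) ^ 2)⁻¹ ∂(μ N)) = 1 ∧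
        (∀ t' ∈ Ioo (t₀ - ε) (t₀ + ε), (∫ x, ((t' - x) ^ 2)⁻¹ ∂(μ N)) = 1 → t' = tN) ∧
        tN = t₀ + hWeight ν t₀ tN * (1 - ∫ x, ((tN - x) ^ 2)⁻¹ ∂ν) := by
  have hν₀ : ∀ᵐ x ∂ν, ρ ≤ |t₀ - x| := ae_le_abs_sub hνfar (by simp [hρ.le])
  set I := secantIntegral ρ ν (t₀, t₀)
  have hI : I ≠ 0 := by
    rw [show I = _ from secantIntegral_diag hρ hν₀]
    exact mul_ne_zero two_ne_zero h3
  obtain ⟨K, hK⟩ := exists_lipschitzWith_secantIntegral hρ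
  obtain ⟨η, hη, hball⟩ := Metric.continuousAt_iff.1 (hK ν inferInstance).continuous.continuousAt
    (|I| / 4) (by positivity)
  set ε₀ := min ρ (η / 2)
  have hclose : ∀ z ∈ closedBall (t₀, t₀) ε₀, |secantIntegral ρ ν z - I| < |I| / 4 :=
    fun z hz => hball <|
      (mem_closedBall.1 hz).trans_lt ((min_le_right _ _).trans_lt (half_lt_self hη))
  have hunif := Metric.tendstoUniformlyOn_iff.1 (tendstoUniformlyOn_secantIntegral hρ hμ hweak
    (isCompact_closedBall (t₀, t₀) ε₀)) (|I| / 4) (by positivity)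
  refine ⟨ε₀, by positivity, fun ε hε hεε₀ =>
    ⟨⟨(2 * |I|)⁻¹, 2 / |I|, by positivity, fun t ht => ?_⟩, ?_⟩⟩
  · have ht₀ : t₀ ∈ Ioo (t₀ - ε) (t₀ + ε) := ⟨by linarith, by linarith⟩
    rw [hWeight_eq_inv_secantIntegral hρ
      (ae_le_abs_sub hνfar (abs_sub_le_of_mem_Ioo ht (hεε₀.trans (min_le_left _ _)))) hν₀]
    exact inv_bounds_of_abs_sub_lt hI
      (by linarith [hclose _ (mk_mem_closedBall_of_mem_Ioo ht ht₀ hεε₀), abs_nonneg I])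
  · have hG := tendsto_truncInvSqIntegral hρ hweak t₀
    rw [← integral_inv_sq_eq_truncInvSqIntegral hρ hν₀, h2] at hG
    filter_upwards [hμfar, hunif, hG.eventually (Metric.ball_mem_nhds 1 (by positivity :
      0 < ε / 2 * |I| / 2))] with N hfar hunifN hGN
    exact exists_unique_root_of_close (μ := μ N) hρ hε (hεε₀.trans (min_le_left _ _)) hI hνfar hfar
      (fun t ht t' ht' => hclose _ (mk_mem_closedBall_of_mem_Ioo ht ht' hεε₀))
      (fun t ht t' ht' => hunifN _ (mk_mem_closedBall_of_mem_Ioo ht ht' hεε₀)) hGN h2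

lemma measSupp_eq_support (μ : Measure ℝ) : MeasSupp μ = μ.support := by
  ext x
  simp only [MeasSupp, mem_ofPred_eq, Measure.mem_support_iff_forall, pos_iff_ne_zero]

section Decomposition

variable {J r N : ℕ} {θ : Fin J → ℝ} {k : Fin J → ℕ} {β : ℕ → ℕ → ℝ} {μ : Measure ℝ}

lemma ae_of_eq_smul_sum_dirac (hμ : μ = (N : ℝ≥0∞)⁻¹ •
      ((∑ j, (k j : ℝ≥0∞) • Measure.dirac (θ j)) +
        ∑ i ∈ Finset.range (N - r), Measure.dirac (β N i)))
    {P : ℝ → Prop} (hθ : ∀ j, P (θ j)) (hβ : ∀ i ∈ Finset.range (N - r), P (β N i)) :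
    ∀ᵐ x ∂μ, P x := by
  rw [hμ, ae_iff]
  simpa [Measure.dirac_apply, hθ] using hβ

lemma integral_eq_of_eq_smul_sum_dirac (hμ : μ = (N : ℝ≥0∞)⁻¹ •
      ((∑ j, (k j : ℝ≥0∞) • Measure.dirac (θ j)) +
        ∑ i ∈ Finset.range (N - r), Measure.dirac (β N i)))
    (hrN : r < N) (f : ℝ → ℝ) :
    ∫ x, f x ∂μ = ((N - r : ℕ) : ℝ) / N * ∫ x, f x ∂(hatNu r β N) +
      (N : ℝ)⁻¹ * ∑ j, (k j : ℝ) * f (θ j) := by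
  have hint (a : ℝ) : Integrable f (Measure.dirac a) := integrable_dirac enorm_lt_top
  rw [hμ, hatNu, integral_smul_measure, integral_smul_measure,
    integral_add_measure (integrable_finsetSum_measure.2 fun j _ => (hint _).smul_measure (by simp))
      (integrable_finsetSum_measure.2 fun i _ => hint _),
    integral_finsetSum_measure fun j _ => (hint _).smul_measure (by simp),
    integral_finsetSum_measure fun i _ => hint _]
  have hNr : ((N - r : ℕ) : ℝ) ≠ 0 := Nat.cast_ne_zero.2 (by omega)
  simp only [integral_smul_measure, integral_dirac, smul_eq_mul, ENNReal.toReal_inv,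
    ENNReal.toReal_natCast]
  field_simp
  ring

lemma fN_eq_of_eq_smul_sum_dirac (hμ : μ = (N : ℝ≥0∞)⁻¹ •
      ((∑ j, (k j : ℝ≥0∞) • Measure.dirac (θ j)) +
        ∑ i ∈ Finset.range (N - r), Measure.dirac (β N i)))
    (hrN : r < N) (ν : Measure ℝ) (t₀ t : ℝ) :
    fN ν r θ k β t₀ N t =
      hWeight ν t₀ t * (∫ x, ((t - x) ^ 2)⁻¹ ∂μ - ∫ x, ((t - x) ^ 2)⁻¹ ∂ν) := by
  rw [fN, integral_eq_of_eq_smul_sum_dirac hμ hrN]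
  simp only [div_eq_mul_inv]
  ring

end Decomposition

theorem stmt10_general
    (ν : Measure ℝ) [IsProbabilityMeasure ν]
    (J r : ℕ) (θ : Fin J → ℝ) (k : Fin J → ℕ)
    (β : ℕ → ℕ → ℝ) (μA : ℕ → Measure ℝ)
    (hprob : ∀ N, IsProbabilityMeasure (μA N))
    (hdecomp : ∀ N, r ≤ N → μA N = (N : ℝ≥0∞)⁻¹ •
      ((∑ j, (k j : ℝ≥0∞) • Measure.dirac (θ j)) +
        ∑ i ∈ Finset.range (N - r), Measure.dirac (β N i)))
    (hweak : ∀ f : BoundedContinuousFunction ℝ ℝ,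
      Tendsto (fun N => ∫ x, f x ∂(μA N)) atTop (𝓝 (∫ x, f x ∂ν)))
    (hβ : ∀ ε > 0, ∀ᶠ N in atTop, ∀ i ∈ Finset.range (N - r),
      Metric.infDist (β N i) (MeasSupp ν) < ε)
    (t₀ : ℝ) (ht₀ : t₀ ∉ MeasSupp ν ∪ Set.range θ)
    (h2 : ∫ x, ((t₀ - x) ^ 2)⁻¹ ∂ν = 1) (h3 : ∫ x, ((t₀ - x) ^ 3)⁻¹ ∂ν ≠ 0) :
    ∃ ε₀ > (0 : ℝ), ∀ ε, 0 < ε → ε ≤ ε₀ →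
      (∃ K₁ K₂ : ℝ, 0 < K₁ ∧ ∀ t ∈ Set.Ioo (t₀ - ε) (t₀ + ε),
        K₁ < |hWeight ν t₀ t| ∧ |hWeight ν t₀ t| < K₂) ∧
      ∀ᶠ N in atTop, ∃ tN ∈ Set.Ioo (t₀ - ε) (t₀ + ε),
        (∫ x, ((tN - x) ^ 2)⁻¹ ∂(μA N)) = 1 ∧
        (∀ t' ∈ Set.Ioo (t₀ - ε) (t₀ + ε), (∫ x, ((t' - x) ^ 2)⁻¹ ∂(μA N)) = 1 → t' = tN) ∧
        tN = t₀ + fN ν r θ k β t₀ N tN := by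
  have hsupp := measSupp_eq_support ν
  have hne : (MeasSupp ν).Nonempty := hsupp ▸ Measure.nonempty_support (NeZero.ne ν)
  have hT : IsClosed (MeasSupp ν ∪ range θ) :=
    (hsupp ▸ Measure.isClosed_support).union (finite_range θ).isClosed
  set δ := infDist t₀ (MeasSupp ν ∪ range θ)
  have hδ : 0 < δ := (hT.notMem_iff_infDist_pos (hne.mono subset_union_left)).1 ht₀
  have hfar (x : ℝ) (hx : x ∈ MeasSupp ν ∪ range θ) : δ ≤ |t₀ - x| := infDist_le_dist_of_mem hx
  have hνsupp : ∀ᵐ x ∂ν, x ∈ MeasSupp ν := hsupp ▸ Measure.support_mem_ae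
  have hνfar : ∀ᵐ x ∂ν, 2 * (δ / 4) ≤ |t₀ - x| :=
    hνsupp.mono fun x hx => by linarith [hfar x (Or.inl hx)]
  have hμfar : ∀ᶠ N in atTop, ∀ᵐ x ∂(μA N), 2 * (δ / 4) ≤ |t₀ - x| := by
    filter_upwards [hβ (δ / 2) (by positivity), eventually_ge_atTop r] with N hβN hrN
    refine ae_of_eq_smul_sum_dirac (hdecomp N hrN)
      (fun j => by linarith [hfar _ (Or.inr ⟨j, rfl⟩)]) fun i hi => ?_
    obtain ⟨s, hs, hβs⟩ := (infDist_lt_iff hne).1 (hβN i hi)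
    linarith [hfar s (Or.inl hs), abs_sub_le t₀ (β N i) s, Real.dist_eq (β N i) s]
  obtain ⟨ε₀, hε₀, H⟩ :=
    exists_window_eventually_unique_root hprob hweak (by positivity) hνfar hμfar h2 h3
  refine ⟨ε₀, hε₀, fun ε hε hεε₀ => (H ε hε hεε₀).imp_right fun hev => ?_⟩
  filter_upwards [hev, eventually_gt_atTop r] with N ⟨tN, htN, hroot, huniq, hfix⟩ hrN
  exact ⟨tN, htN, hroot, huniq, by rwa [fN_eq_of_eq_smul_sum_dirac (hdecomp N hrN.le) hrN, hroot]⟩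

/-- existence, uniqueness and fixed-point identity for `t₀(N)` near a point
`t₀ ∉ supp(ν) ∪ Θ` with `∫ dν(x)/(t₀−x)² = 1` and `∫ dν(x)/(t₀−x)³ ≠ 0`. -/
theorem stmt10
    (ν : Measure ℝ) [IsProbabilityMeasure ν] (hcomp : IsCompact (MeasSupp ν))
    (J r : ℕ) (θ : Fin J → ℝ) (k : Fin J → ℕ)
    (hθanti : StrictAnti θ) (hθsupp : ∀ j, θ j ∉ MeasSupp ν)
    (hkpos : ∀ j, 0 < k j) (hkr : ∑ j, k j = r)
    (β : ℕ → ℕ → ℝ) (μA : ℕ → Measure ℝ)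
    (hprob : ∀ N, IsProbabilityMeasure (μA N))
    (hdecomp : ∀ N, r ≤ N → μA N = (N : ℝ≥0∞)⁻¹ •
      ((∑ j, (k j : ℝ≥0∞) • Measure.dirac (θ j)) +
        ∑ i ∈ Finset.range (N - r), Measure.dirac (β N i)))
    (hweak : ∀ f : BoundedContinuousFunction ℝ ℝ,
      Tendsto (fun N => ∫ x, f x ∂(μA N)) atTop (𝓝 (∫ x, f x ∂ν)))
    (hβ : ∀ ε > 0, ∀ᶠ N in atTop, ∀ i ∈ Finset.range (N - r),
      Metric.infDist (β N i) (MeasSupp ν) < ε)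
    (t₀ : ℝ) (ht₀ : t₀ ∉ MeasSupp ν ∪ Set.range θ)
    (h2 : ∫ x, ((t₀ - x) ^ 2)⁻¹ ∂ν = 1) (h3 : ∫ x, ((t₀ - x) ^ 3)⁻¹ ∂ν ≠ 0) :
    ∃ ε₀ > (0 : ℝ), ∀ ε, 0 < ε → ε ≤ ε₀ →
      (∃ K₁ K₂ : ℝ, 0 < K₁ ∧ ∀ t ∈ Set.Ioo (t₀ - ε) (t₀ + ε),
        K₁ < |hWeight ν t₀ t| ∧ |hWeight ν t₀ t| < K₂) ∧
      ∀ᶠ N in atTop, ∃ tN ∈ Set.Ioo (t₀ - ε) (t₀ + ε),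
        (∫ x, ((tN - x) ^ 2)⁻¹ ∂(μA N)) = 1 ∧
        (∀ t' ∈ Set.Ioo (t₀ - ε) (t₀ + ε), (∫ x, ((t' - x) ^ 2)⁻¹ ∂(μA N)) = 1 → t' = tN) ∧
        tN = t₀ + fN ν r θ k β t₀ N tN :=
  stmt10_general ν J r θ k β μA hprob hdecomp hweak hβ t₀ ht₀ h2 h3
end
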